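/- There do not exist integers p > 1, q_2 ≠ 0, r_1, r_2, s_2 with gcd(p, q_2) = 1 and |p·s_2 - q_2·r_2| = 1 such that -r_1·p + p·r_2 = 2 and -r_1·q_2 + p·s_2 = 1. -/
import Mathlib


/-- The `L(2,1)` case in the proof of Theorem A.1: there is no Heegaard gluing
data with `p > 1`, `q₂ ≠ 0`, `gcd(p,q₂) = 1`, `|p*s₂ - q₂*r₂| = 1` satisfying
`-r₁*p + p*r₂ = 2` and `-r₁*q₂ + p*s₂ = 1`. -/
theorem L21_case :
    ¬ ∃ p q₂ r₁ r₂ s₂ : ℤ, 1 < p ∧ q₂ ≠ 0 ∧ Int.gcd p q₂ = 1 ∧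
      |p * s₂ - q₂ * r₂| = 1 ∧ -r₁ * p + p * r₂ = 2 ∧ -r₁ * q₂ + p * s₂ = 1 := by
  rintro ⟨p, q₂, r₁, r₂, s₂, hp, hq, hgcd, habs, h1, h2⟩
  -- p divides 2
  have hpd : p ∣ 2 := ⟨-r₁ + r₂, by linarith [h1]⟩
  have hp2 : p = 2 := by
    have h := Int.le_of_dvd (by norm_num) hpd
    omega
  subst hp2
  have hr : r₁ = r₂ - 1 := by linarith
  subst hr
  have key : (2 * s₂ - q₂ * r₂) + q₂ = 1 := by ring_nf; ring_nf at h2; linarith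
  rcases abs_eq (by norm_num : (0:ℤ) ≤ 1) |>.mp habs with h | h
  · have : q₂ = 0 := by linarith
    exact hq this
  · have : q₂ = 2 := by linarith
    subst this
    simp [Int.gcd] at hgcd
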